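/- Let A be an m×n SR(ε) matrix (every nonzero r×r minor has sign ε_r), with ε_0 := 1. If x ∈ ℝ^n satisfies Ax ≠ 0 and S^-(Ax) = S^-(x) = r for some 0 ≤ r ≤ min{m,n}−1, then the sign of the first nonzero component of Ax equals ε_r ε_{r+1} times the sign of the first nonzero component of x. -/

import Mathlib

open Matrix Filter

/-- Number of sign changes in a list of reals (consecutive pairs with negative product). -/
noncomputable def signChanges (l : List ℝ) : ℕ :=
  (l.zip l.tail).countP (fun p => decide (p.1 * p.2 < 0))

/-- `S^-(v)`: sign changes of the coordinates of `v` after discarding zero entries. -/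
noncomputable def Sm {n : ℕ} (v : Fin n → ℝ) : ℕ :=
  signChanges ((List.ofFn v).filter (fun x => decide (x ≠ 0)))

/-- `S^+(v)`: maximal number of sign changes over all ±1 completions of the zero
entries of `v`, with the convention `S^+(0) = n`. -/
noncomputable def Sp {n : ℕ} (v : Fin n → ℝ) : ℕ :=
  if v = 0 then n
  else Finset.univ.sup (fun σ : Fin n → Bool =>
    signChanges (List.ofFn (fun i => if v i = 0 then (if σ i then (1:ℝ) else -1) else v i)))

/-- First nonzero entry of a vector (`0` if the vector is zero). -/
noncomputable def firstNz {n : ℕ} (v : Fin n → ℝ) : ℝ :=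
  ((List.ofFn v).filter (fun x => decide (x ≠ 0))).headI

/-- `A` is strictly sign regular with sign pattern `ε`:
every `r × r` minor (`1 ≤ r ≤ min m n`) is nonzero with sign `ε r`. -/
def ssrPattern {m n : ℕ} (A : Matrix (Fin m) (Fin n) ℝ) (ε : ℕ → ℝ) : Prop :=
  ∀ r : ℕ, 1 ≤ r → r ≤ min m n → ∀ (f : Fin r → Fin m) (g : Fin r → Fin n),
    StrictMono f → StrictMono g → 0 < ε r * (A.submatrix f g).det

/-- `A` is sign regular with sign pattern `ε`:
every nonzero `r × r` minor (`1 ≤ r ≤ min m n`) has sign `ε r`. -/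
def srPattern {m n : ℕ} (A : Matrix (Fin m) (Fin n) ℝ) (ε : ℕ → ℝ) : Prop :=
  ∀ r : ℕ, 1 ≤ r → r ≤ min m n → ∀ (f : Fin r → Fin m) (g : Fin r → Fin n),
    StrictMono f → StrictMono g → 0 ≤ ε r * (A.submatrix f g).det

/-- The map `f` picks out consecutive indices. -/
def Contig {r m : ℕ} (f : Fin r → Fin m) : Prop :=
  ∃ a : ℕ, ∀ i : Fin r, (f i : ℕ) = a + (i : ℕ)

/-!
Write `γ` and `δ` for the signs of the first nonzero entries of `x` and `A x`. As `S⁻(x) = r`,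
the coordinates of `x` fall into `r + 1` consecutive blocks on which `x` has sign `γ (-1)ᵏ`;
collapsing each block with the weights `|x_q|` gives `x = C (γ • alt)` with `C ≥ 0` having one
nonzero entry per row in a monotone column, so that `A C` is again `SR(ε)` (multilinearity of
the determinant). As `S⁻(A x) = r`, there are rows `p₀ < ⋯ < p_r` where `A x` has sign
`δ (-1)ʲ`. Hence the square `SR(ε)` matrix `D = (A C)[p, ·]` sends `alt` to a vector of sign
pattern `δ γ (-1)ʲ`, and it remains to see `δ γ = ε_r ε_{r+1}`.

Expanding the bordered determinant `det [D alt | D[f, g]]` along its first column gives a sum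
of terms of one sign, `(-1)^(f i) (D alt)_{f i}` times `s × s` minors, as long as the rows `f`
are contiguous. For `f` the full row set this determinant is `det D`, whose sign contradicts
`δ γ ≠ ε_r ε_{r+1}`, so all `r × r` minors vanish; once all contiguous `(s+1) × (s+1)` minors
vanish the bordered determinant is `0`, so all contiguous `s × s` minors vanish. Descending to
`s = 0` contradicts `det` of the empty matrix being `1`.
-/

lemma Real.sign_mul_abs (r : ℝ) : Real.sign r * |r| = r := by
  rcases lt_trichotomy r 0 with h | rfl | h
  · simp [Real.sign_of_neg h, abs_of_neg h]
  · simp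
  · simp [Real.sign_of_pos h, abs_of_pos h]

lemma Real.sign_mul_self_of_ne_zero {a : ℝ} (ha : a ≠ 0) : Real.sign a * Real.sign a = 1 := by
  rcases Real.sign_apply_eq_of_ne_zero a ha with h | h <;> simp [h]

lemma Real.sign_eq_sign_mul_neg_one_pow {a b : ℝ} (ha : a ≠ 0) (hb : b ≠ 0) :
    Real.sign b = Real.sign a * (-1) ^ (if a * b < 0 then 1 else 0) := by
  rcases lt_or_gt_of_ne ha with ha | ha <;> rcases lt_or_gt_of_ne hb with hb | hb <;>
    simp only [Real.sign_of_neg, Real.sign_of_pos, ha, hb] <;> split_ifs <;> norm_num <;>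
    nlinarith

lemma eq_of_mul_self_eq_one_of_pos_mul {a b : ℝ} (ha : a * a = 1) (hb : b * b = 1)
    (h : 0 < a * b) : a = b := by
  nlinarith [sq_nonneg (a - b)]

lemma signChanges_cons_cons (a b : ℝ) (t : List ℝ) :
    signChanges (a :: b :: t) = (if a * b < 0 then 1 else 0) + signChanges (b :: t) := by
  by_cases h : a * b < 0 <;> simp [signChanges, h, add_comm]

lemma signChanges_append_singleton_mem_Icc (L : List ℝ) (a : ℝ) :
    signChanges (L ++ [a]) ∈ Set.Icc (signChanges L) (signChanges L + 1) := by
  rw [Set.mem_Icc]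
  induction L with
  | nil => simp [signChanges]
  | cons b t ih =>
    cases t with
    | nil =>
      rw [List.cons_append, List.nil_append, signChanges_cons_cons]
      split <;> simp [signChanges]
    | cons c t =>
      rw [List.cons_append, List.cons_append, signChanges_cons_cons, signChanges_cons_cons]
      rw [List.cons_append] at ih
      omega

lemma sign_getLast_eq_sign_headI_mul (L : List ℝ) (hL : L ≠ []) (hnz : ∀ a ∈ L, a ≠ 0) :
    Real.sign (L.getLast hL) = Real.sign L.headI * (-1) ^ signChanges L := by
  induction L with
  | nil => exact absurd rfl hL
  | cons a t ih =>
    cases t with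
    | nil => simp [signChanges]
    | cons b t =>
      rw [List.getLast_cons (List.cons_ne_nil b t), ih (List.cons_ne_nil b t)
        (fun x hx => hnz x (List.mem_cons_of_mem a hx)), signChanges_cons_cons, pow_add,
        List.headI_cons, List.headI_cons,
        Real.sign_eq_sign_mul_neg_one_pow (hnz a (by simp)) (hnz b (by simp))]
      ring

/-- `signChanges (nonzeroPrefix v (q + 1))` is the index of the sign block containing `v q`. -/
noncomputable def nonzeroPrefix {n : ℕ} (v : Fin n → ℝ) (k : ℕ) : List ℝ :=
  ((List.ofFn v).take k).filter (fun x => decide (x ≠ 0))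

section NonzeroPrefix

variable {n : ℕ} (v : Fin n → ℝ)

lemma ne_zero_of_mem_nonzeroPrefix {k : ℕ} {a : ℝ} (ha : a ∈ nonzeroPrefix v k) :
    a ≠ 0 := by
  simpa using (List.mem_filter.1 ha).2

lemma nonzeroPrefix_of_le {k : ℕ} (hk : n ≤ k) :
    nonzeroPrefix v k = (List.ofFn v).filter (fun x => decide (x ≠ 0)) := by
  simp [nonzeroPrefix, List.take_of_length_le, hk]

lemma signChanges_nonzeroPrefix_of_le {k : ℕ} (hk : n ≤ k) :
    signChanges (nonzeroPrefix v k) = Sm v := by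
  rw [nonzeroPrefix_of_le v hk, Sm]

lemma nonzeroPrefix_ne_nil (hv : v ≠ 0) {k : ℕ} (hk : n ≤ k) : nonzeroPrefix v k ≠ [] := by
  obtain ⟨q, hq⟩ := Function.ne_iff.1 hv
  rw [nonzeroPrefix_of_le v hk]
  exact List.ne_nil_of_mem (List.mem_filter.2 ⟨List.mem_ofFn.2 ⟨q, rfl⟩, by simpa using hq⟩)

lemma nonzeroPrefix_succ (k : ℕ) :
    nonzeroPrefix v (k + 1) =
      nonzeroPrefix v k ++ (List.ofFn v)[k]?.toList.filter (fun x => decide (x ≠ 0)) := by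
  simp only [nonzeroPrefix, List.take_add_one, List.filter_append]

lemma nonzeroPrefix_succ_of_ne_zero (q : Fin n) (hq : v q ≠ 0) :
    nonzeroPrefix v (q + 1) = nonzeroPrefix v q ++ [v q] := by
  simp [nonzeroPrefix_succ, hq]

lemma nonzeroPrefix_succ_eq_self {k : ℕ} (h : ∀ hk : k < n, v ⟨k, hk⟩ = 0) :
    nonzeroPrefix v (k + 1) = nonzeroPrefix v k := by
  rw [nonzeroPrefix_succ]
  by_cases hk : k < n
  · simp [hk, h hk]
  · simp [hk]

lemma signChanges_nonzeroPrefix_succ_mem_Icc (k : ℕ) :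
    signChanges (nonzeroPrefix v (k + 1)) ∈
      Set.Icc (signChanges (nonzeroPrefix v k)) (signChanges (nonzeroPrefix v k) + 1) := by
  rw [nonzeroPrefix_succ]
  rcases (List.ofFn v)[k]? with _ | a
  · simp
  · by_cases ha : a = 0
    · simp [ha]
    · simpa [ha] using signChanges_append_singleton_mem_Icc (nonzeroPrefix v k) a

lemma monotone_signChanges_nonzeroPrefix : Monotone fun k => signChanges (nonzeroPrefix v k) :=
  monotone_nat_of_le_succ fun k => (signChanges_nonzeroPrefix_succ_mem_Icc v k).1

lemma headI_nonzeroPrefix {k : ℕ} (h : nonzeroPrefix v k ≠ []) :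
    (nonzeroPrefix v k).headI = firstNz v := by
  obtain ⟨a, t, hat⟩ := List.exists_cons_of_ne_nil h
  have hsplit : (List.ofFn v).filter (fun x => decide (x ≠ 0)) = nonzeroPrefix v k ++
      ((List.ofFn v).drop k).filter (fun x => decide (x ≠ 0)) := by
    rw [nonzeroPrefix, ← List.filter_append, List.take_append_drop]
  rw [firstNz, hsplit, hat]
  rfl

lemma firstNz_ne_zero (hv : v ≠ 0) : firstNz v ≠ 0 := by
  have hne := nonzeroPrefix_ne_nil v hv le_rfl
  rw [← headI_nonzeroPrefix v hne]
  obtain ⟨a, t, hat⟩ := List.exists_cons_of_ne_nil hne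
  have ha : a ∈ nonzeroPrefix v n := hat ▸ List.mem_cons_self
  rw [hat]
  exact ne_zero_of_mem_nonzeroPrefix v ha

lemma sign_eq_sign_firstNz_mul (q : Fin n) (hq : v q ≠ 0) :
    Real.sign (v q) =
      Real.sign (firstNz v) * (-1) ^ signChanges (nonzeroPrefix v (q + 1)) := by
  have hne : nonzeroPrefix v (q + 1) ≠ [] := by simp [nonzeroPrefix_succ_of_ne_zero v q hq]
  have hlast : (nonzeroPrefix v (q + 1)).getLast hne = v q := by
    simp only [nonzeroPrefix_succ_of_ne_zero v q hq, List.getLast_append_singleton]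
  rw [← hlast, sign_getLast_eq_sign_headI_mul _ hne fun a => ne_zero_of_mem_nonzeroPrefix v,
    headI_nonzeroPrefix v hne]

/-- The shortest nonempty prefix with at least `j` sign changes ends in a nonzero entry, which
adds at most one change. -/
lemma exists_signChanges_nonzeroPrefix_eq (hv : v ≠ 0) {j : ℕ} (hj : j ≤ Sm v) :
    ∃ q : Fin n, v q ≠ 0 ∧ signChanges (nonzeroPrefix v (q + 1)) = j := by
  have hex : ∃ k, nonzeroPrefix v k ≠ [] ∧ j ≤ signChanges (nonzeroPrefix v k) :=
    ⟨n, nonzeroPrefix_ne_nil v hv le_rfl, by rwa [signChanges_nonzeroPrefix_of_le v le_rfl]⟩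
  obtain ⟨hne, hjk⟩ := Nat.find_spec hex
  have h0 : Nat.find hex ≠ 0 := fun h => by
    rw [h] at hne
    simp [nonzeroPrefix] at hne
  obtain ⟨q, hq⟩ : ∃ q, Nat.find hex = q + 1 := ⟨_, (Nat.succ_pred_eq_of_ne_zero h0).symm⟩
  have hmin : ¬ (nonzeroPrefix v q ≠ [] ∧ j ≤ signChanges (nonzeroPrefix v q)) :=
    Nat.find_min hex (by omega)
  rw [hq] at hne hjk
  obtain ⟨hqn, hvq⟩ : ∃ hqn : q < n, v ⟨q, hqn⟩ ≠ 0 := by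
    by_contra! h
    rw [nonzeroPrefix_succ_eq_self v h] at hne hjk
    exact hmin ⟨hne, hjk⟩
  refine ⟨⟨q, hqn⟩, hvq, le_antisymm ?_ hjk⟩
  by_cases hnil : nonzeroPrefix v q = []
  · simp [nonzeroPrefix_succ_of_ne_zero v ⟨q, hqn⟩ hvq, hnil, signChanges]
  · have hlt : signChanges (nonzeroPrefix v q) < j := by
      by_contra! h
      exact hmin ⟨hnil, h⟩
    have := (signChanges_nonzeroPrefix_succ_mem_Icc v q).2
    change signChanges (nonzeroPrefix v (q + 1)) ≤ j
    omega

end NonzeroPrefix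

noncomputable def alternatingSigns (N : ℕ) : Fin N → ℝ := fun k => (-1) ^ (k : ℕ)

section SignBlocks

variable {n : ℕ} (v : Fin n → ℝ)

lemma exists_monotone_eq_mulVec_alternatingSigns {r : ℕ} (hr : Sm v ≤ r) :
    ∃ β : Fin n → Fin (r + 1), Monotone β ∧
      v = (Matrix.of fun q k => if β q = k then |v q| else 0) *ᵥ
        (Real.sign (firstNz v) • alternatingSigns (r + 1)) := by
  have hlt (q : Fin n) : signChanges (nonzeroPrefix v (q + 1)) < r + 1 := by
    have : signChanges (nonzeroPrefix v (q + 1)) ≤ signChanges (nonzeroPrefix v n) :=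
      monotone_signChanges_nonzeroPrefix v (Nat.succ_le_of_lt q.isLt)
    rw [signChanges_nonzeroPrefix_of_le v le_rfl] at this
    omega
  refine ⟨fun q => ⟨_, hlt q⟩, fun q q' h => ?_, funext fun q => ?_⟩
  · exact monotone_signChanges_nonzeroPrefix v (Nat.succ_le_succ h)
  · simp only [mulVec, dotProduct, of_apply, ite_mul, zero_mul, Finset.sum_ite_eq,
      Finset.mem_univ, if_true, Pi.smul_apply, smul_eq_mul, alternatingSigns]
    by_cases hq : v q = 0
    · simp [hq]
    · rw [← sign_eq_sign_firstNz_mul v q hq, mul_comm, Real.sign_mul_abs]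

lemma exists_strictMono_alternating (hv : v ≠ 0) {r : ℕ} (hr : r ≤ Sm v) :
    ∃ p : Fin (r + 1) → Fin n, StrictMono p ∧
      ∀ j : Fin (r + 1), 0 < Real.sign (firstNz v) * (-1) ^ (j : ℕ) * v (p j) := by
  choose p hp hpj using fun j : Fin (r + 1) =>
    exists_signChanges_nonzeroPrefix_eq v hv (Nat.le_trans (Nat.lt_succ_iff.1 j.isLt) hr)
  refine ⟨p, fun j j' hjj' => lt_of_not_ge fun hle => ?_, fun j => ?_⟩
  · have := monotone_signChanges_nonzeroPrefix v (Nat.succ_le_succ (Fin.le_def.1 hle))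
    simp only [hpj] at this
    exact absurd hjj' (not_lt.2 (Fin.le_def.2 this))
  · rw [← hpj j, ← sign_eq_sign_firstNz_mul v _ (hp j)]
    exact Real.sign_mul_pos_of_ne_zero _ (hp j)

end SignBlocks

section SignRegular

variable {m n : ℕ} {A : Matrix (Fin m) (Fin n) ℝ} {ε : ℕ → ℝ}

lemma srPattern.det_submatrix_nonneg (hA : srPattern A ε) (hε0 : ε 0 = 1) {s : ℕ}
    {f : Fin s → Fin m} {g : Fin s → Fin n} (hf : StrictMono f) (hg : StrictMono g) :
    0 ≤ ε s * (A.submatrix f g).det := by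
  rcases Nat.eq_zero_or_pos s with rfl | hs
  · simp [hε0]
  · exact hA s hs (le_min (Fin.le_of_injective f hf.injective)
      (Fin.le_of_injective g hg.injective)) f g hf hg

lemma srPattern.submatrix (hA : srPattern A ε) {m' n' : ℕ} {f : Fin m' → Fin m}
    {g : Fin n' → Fin n} (hf : StrictMono f) (hg : StrictMono g) :
    srPattern (A.submatrix f g) ε := fun s hs hsmn f' g' hf' hg' => by
  rw [submatrix_submatrix]
  exact hA s hs (hsmn.trans (min_le_min (Fin.le_of_injective f hf.injective)
    (Fin.le_of_injective g hg.injective))) _ _ (hf.comp hf') (hg.comp hg')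

lemma srPattern.mul_of_monotone (hA : srPattern A ε) {N : ℕ} {β : Fin n → Fin N}
    (hβ : Monotone β) {c : Fin n → ℝ} (hc : ∀ q, 0 ≤ c q) :
    srPattern (A * Matrix.of fun q k => if β q = k then c q else 0) ε := by
  intro s hs _ f g hf hg
  have hcols : ((A * Matrix.of fun q k => if β q = k then c q else 0).submatrix f g)ᵀ =
      fun j => ∑ q ∈ Finset.univ.filter (β · = g j), c q • fun i => A (f i) q := by
    ext j i
    simp [Matrix.mul_apply, Finset.sum_apply, Finset.sum_filter, mul_comm]
  rw [← det_transpose, hcols]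
  change 0 ≤ ε s *
    (detRowAlternating : (Fin s → ℝ) [⋀^Fin s]→ₗ[ℝ] ℝ).toMultilinearMap _
  rw [MultilinearMap.map_sum_finset, Finset.mul_sum]
  refine Finset.sum_nonneg fun φ hφ => ?_
  have hβφ (j : Fin s) : β (φ j) = g j := by simpa using Fintype.mem_piFinset.1 hφ j
  have hφ : StrictMono φ := fun i j hij => lt_of_not_ge fun hle => by
    have := hβ hle
    rw [hβφ, hβφ] at this
    exact (hg hij).not_ge this
  rw [MultilinearMap.map_smul_univ, smul_eq_mul, mul_left_comm]
  refine mul_nonneg (Finset.prod_nonneg fun j _ => hc (φ j)) ?_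
  change 0 ≤ ε s * ((A.submatrix f φ)ᵀ).det
  rw [det_transpose]
  exact hA s hs (le_min (Fin.le_of_injective f hf.injective)
    (Fin.le_of_injective φ hφ.injective)) f φ hf hφ

end SignRegular

lemma Fin.exists_eq_succAbove_of_strictMono {r : ℕ} {g : Fin r → Fin (r + 1)}
    (hg : StrictMono g) : ∃ t : Fin (r + 1), g = t.succAbove := by
  obtain ⟨t, ht⟩ : ∃ t, t ∉ Set.range g := by
    by_contra! h
    have := Fintype.card_le_of_surjective g fun t => h t
    simp at this
  refine ⟨t, ?_⟩
  have hmem (i : Fin r) : g i ∈ ({t}ᶜ : Finset (Fin (r + 1))) := by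
    simpa [eq_comm] using fun h => ht ⟨i, h⟩
  rw [Finset.orderEmbOfFin_unique (by simp [Finset.card_compl]) hmem hg,
    Finset.orderEmbOfFin_compl_singleton_eq_succAboveOrderEmb]
  rfl

lemma Contig.exists_eq_comp_succAbove {s N : ℕ} {f : Fin s → Fin N} (hf : Contig f)
    (hs : s < N) :
    ∃ (f' : Fin (s + 1) → Fin N) (j : Fin (s + 1)), Contig f' ∧ f = f' ∘ j.succAbove := by
  rcases s with _ | s
  · exact ⟨fun _ => ⟨0, hs⟩, 0, ⟨0, fun i => by simp [Fin.fin_one_eq_zero i]⟩,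
      funext fun i => i.elim0⟩
  obtain ⟨a, ha⟩ := hf
  have hlast : (f (Fin.last s) : ℕ) = a + s := by simpa using ha (Fin.last s)
  have := (f (Fin.last s)).isLt
  by_cases h : a + s + 1 < N
  · refine ⟨fun i => ⟨a + i, by omega⟩, Fin.last _, ⟨a, fun i => rfl⟩,
      funext fun i => ?_⟩
    ext
    simp [ha]
  · refine ⟨fun i => ⟨a - 1 + i, by omega⟩, 0, ⟨a - 1, fun i => rfl⟩,
      funext fun i => ?_⟩
    ext
    simp only [Function.comp_apply, Fin.succAbove_zero, Fin.val_succ, ha]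
    omega

lemma Contig.eq_id {N : ℕ} {f : Fin N → Fin N} (hf : Contig f) : f = id := by
  obtain ⟨a, ha⟩ := hf
  rcases N with _ | N
  · exact funext fun i => i.elim0
  have hlast : (f (Fin.last N) : ℕ) = a + N := by simpa using ha (Fin.last N)
  have := (f (Fin.last N)).isLt
  exact funext fun i => Fin.ext (by rw [ha i, id]; omega)

section Determinants

variable {R : Type*} [CommRing R]

lemma Matrix.det_submatrix_eq_zero_of_forall_strictMono {ι κ : Type*} [LinearOrder κ]
    (D : Matrix ι κ R) {s : ℕ} (f : Fin s → ι)
    (hD : ∀ g : Fin s → κ, StrictMono g → (D.submatrix f g).det = 0) (h : Fin s → κ) :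
    (D.submatrix f h).det = 0 := by
  by_cases hinj : Function.Injective h
  · have hsort : StrictMono (h ∘ Tuple.sort h) :=
      (Tuple.monotone_sort h).strictMono_of_injective (hinj.comp (Tuple.sort h).injective)
    have hperm : D.submatrix f h =
        (D.submatrix f (h ∘ Tuple.sort h)).submatrix id ⇑(Tuple.sort h)⁻¹ := by
      ext i j
      simp
    rw [hperm, det_permute', hD _ hsort, mul_zero]
  · obtain ⟨i, j, hij, hne⟩ : ∃ i j, h i = h j ∧ i ≠ j := by
      simpa [Function.Injective] using hinj
    exact det_zero_of_column_eq hne fun k => by simp [hij]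

lemma Matrix.sum_mul_det_submatrix_cons {ι κ : Type*} [Fintype κ] (D : Matrix ι κ R)
    (y : κ → R) {s : ℕ} (f : Fin (s + 1) → ι) (g : Fin s → κ) :
    ∑ k, y k * (D.submatrix f (Fin.cons k g)).det =
      ∑ i : Fin (s + 1), (-1) ^ (i : ℕ) * (D *ᵥ y) (f i) *
        (D.submatrix (f ∘ i.succAbove) g).det := by
  simp_rw [det_succ_column_zero, Finset.mul_sum]
  rw [Finset.sum_comm]
  refine Finset.sum_congr rfl fun i _ => ?_
  simp only [submatrix_apply, submatrix_submatrix, Fin.cons_zero, Fin.cons_comp_succ,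
    mulVec, dotProduct, Finset.mul_sum, Finset.sum_mul]
  exact Finset.sum_congr rfl fun k _ => by ring

lemma Matrix.sum_mul_det_submatrix_cons_succAbove {N : ℕ}
    (D : Matrix (Fin (N + 1)) (Fin (N + 1)) R) (y : Fin (N + 1) → R) (t : Fin (N + 1)) :
    ∑ k, y k * (D.submatrix id (Fin.cons k t.succAbove)).det =
      y t * (-1) ^ (t : ℕ) * D.det := by
  rw [Fintype.sum_eq_single t fun k hk => ?_]
  · have hcycle : (Fin.cons t t.succAbove : Fin (N + 1) → Fin (N + 1)) = t.cycleRange.symm := by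
      ext i
      cases i using Fin.cases <;> simp [Fin.cycleRange_symm_zero]
    rw [hcycle, det_permute', Equiv.Perm.sign_symm, Fin.sign_cycleRange]
    simp [mul_assoc]
  · obtain ⟨u, rfl⟩ := Fin.exists_succAbove_eq hk
    rw [det_zero_of_column_eq (i := 0) (j := u.succ) (Fin.succ_ne_zero u).symm (by simp),
      mul_zero]

end Determinants

section AlternatingImage

variable {ε : ℕ → ℝ} {σ : ℝ}

/-- `hsum` says that the bordered determinant `det [D alt | D[f, g]]` has the wrong sign. -/
lemma det_submatrix_succAbove_eq_zero {M N : ℕ} {D : Matrix (Fin M) (Fin N) ℝ}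
    (hD : srPattern D ε) (hε0 : ε 0 = 1)
    (hw : ∀ j : Fin M, 0 < σ * (-1) ^ (j : ℕ) * (D *ᵥ alternatingSigns N) j)
    {s a : ℕ} (hεs : ε s ≠ 0) {f : Fin (s + 1) → Fin M} (hf : ∀ i, (f i : ℕ) = a + i)
    {g : Fin s → Fin N} (hg : StrictMono g)
    (hsum : σ * (-1) ^ a * ε s *
      ∑ k, alternatingSigns N k * (D.submatrix f (Fin.cons k g)).det ≤ 0)
    (i : Fin (s + 1)) : (D.submatrix (f ∘ i.succAbove) g).det = 0 := by
  have hfmono : StrictMono f := fun i j h => by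
    rw [Fin.lt_def, hf, hf]
    exact Nat.add_lt_add_left h a
  rw [Matrix.sum_mul_det_submatrix_cons, Finset.mul_sum] at hsum
  set w := D *ᵥ alternatingSigns N
  have hterm (i : Fin (s + 1)) :
      σ * (-1) ^ a * ε s *
          ((-1) ^ (i : ℕ) * w (f i) * (D.submatrix (f ∘ i.succAbove) g).det) =
        σ * (-1) ^ (f i : ℕ) * w (f i) * (ε s * (D.submatrix (f ∘ i.succAbove) g).det) := by
    rw [hf, pow_add]
    ring
  rw [Finset.sum_congr rfl fun i _ => hterm i] at hsum
  have hnonneg : ∀ i ∈ Finset.univ, 0 ≤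
      σ * (-1) ^ (f i : ℕ) * w (f i) * (ε s * (D.submatrix (f ∘ i.succAbove) g).det) :=
    fun i _ => mul_nonneg (hw _).le
      (hD.det_submatrix_nonneg hε0 (hfmono.comp (Fin.strictMono_succAbove i)) hg)
  have hzero := (Finset.sum_eq_zero_iff_of_nonneg hnonneg).1
    (le_antisymm hsum (Finset.sum_nonneg hnonneg)) i (Finset.mem_univ i)
  exact (mul_eq_zero.1 ((mul_eq_zero.1 hzero).resolve_left (hw _).ne')).resolve_left hεs

lemma det_submatrix_succAbove_succAbove_eq_zero {r : ℕ}
    {D : Matrix (Fin (r + 1)) (Fin (r + 1)) ℝ} (hD : srPattern D ε) (hε0 : ε 0 = 1)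
    (hw : ∀ j : Fin (r + 1), 0 < σ * (-1) ^ (j : ℕ) * (D *ᵥ alternatingSigns (r + 1)) j)
    (hεr : ε r ≠ 0) (hdet : σ * ε r * D.det ≤ 0) (j t : Fin (r + 1)) :
    (D.submatrix j.succAbove t.succAbove).det = 0 := by
  refine det_submatrix_succAbove_eq_zero hD hε0 hw hεr (a := 0) (f := id) (fun i => by simp)
    (Fin.strictMono_succAbove t) ?_ j
  rw [Matrix.sum_mul_det_submatrix_cons_succAbove, alternatingSigns, ← pow_add, ← two_mul,
    pow_mul]
  simpa using hdet

theorem srPattern.pos_mul_of_mulVec_alternatingSigns {r : ℕ}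
    {D : Matrix (Fin (r + 1)) (Fin (r + 1)) ℝ} (hD : srPattern D ε) (hε0 : ε 0 = 1)
    (hsv : ∀ s, ε s = 1 ∨ ε s = -1)
    (hw : ∀ j : Fin (r + 1), 0 < σ * (-1) ^ (j : ℕ) * (D *ᵥ alternatingSigns (r + 1)) j) :
    0 < σ * ε r * ε (r + 1) := by
  have hε (s : ℕ) : ε s ≠ 0 := by rcases hsv s with h | h <;> simp [h]
  by_contra! hneg
  have hdet : σ * ε r * D.det ≤ 0 := by
    have hnonneg : 0 ≤ ε (r + 1) * D.det := by
      simpa using hD.det_submatrix_nonneg hε0 (f := id) (g := id) strictMono_id strictMono_id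
    have hsq : ε (r + 1) * ε (r + 1) = 1 := by rcases hsv (r + 1) with h | h <;> simp [h]
    have hprod : σ * ε r * D.det = (σ * ε r * ε (r + 1)) * (ε (r + 1) * D.det) := by
      linear_combination (-(σ * ε r * D.det)) * hsq
    rw [hprod]
    exact mul_nonpos_of_nonpos_of_nonneg hneg hnonneg
  have hminors : ∀ s ≤ r, ∀ f : Fin s → Fin (r + 1), Contig f →
      ∀ g : Fin s → Fin (r + 1), StrictMono g → (D.submatrix f g).det = 0 := by
    intro s hs
    induction hs using Nat.decreasingInduction with
    | self =>
      intro f hf g hg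
      obtain ⟨f', j, hf', rfl⟩ := hf.exists_eq_comp_succAbove (Nat.lt_succ_self r)
      obtain ⟨t, rfl⟩ := Fin.exists_eq_succAbove_of_strictMono hg
      rw [hf'.eq_id]
      exact det_submatrix_succAbove_succAbove_eq_zero hD hε0 hw (hε r) hdet j t
    | of_succ s hs ih =>
      intro f hf g hg
      obtain ⟨f', j, ⟨a, ha⟩, rfl⟩ := hf.exists_eq_comp_succAbove (by omega)
      refine det_submatrix_succAbove_eq_zero hD hε0 hw (hε s) ha hg ?_ j
      rw [Finset.sum_eq_zero fun k _ => ?_, mul_zero]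
      rw [det_submatrix_eq_zero_of_forall_strictMono D f' (fun g' hg' => ih f' ⟨a, ha⟩ g' hg'),
        mul_zero]
  simpa using hminors 0 r.zero_le Fin.elim0 ⟨0, fun i => i.elim0⟩ Fin.elim0 fun i => i.elim0

end AlternatingImage

theorem stmt13_general {m n : ℕ} (A : Matrix (Fin m) (Fin n) ℝ) (ε : ℕ → ℝ)
    (hε0 : ε 0 = 1) (hsv : ∀ r, ε r = 1 ∨ ε r = -1) (hA : srPattern A ε)
    (x : Fin n → ℝ) (hAx : A *ᵥ x ≠ 0) (r : ℕ)
    (h1 : Sm (A *ᵥ x) = r) (h2 : Sm x = r) :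
    Real.sign (firstNz (A *ᵥ x)) = ε r * ε (r + 1) * Real.sign (firstNz x) := by
  have hx : x ≠ 0 := fun h => hAx (by simp [h])
  obtain ⟨β, hβ, hxC⟩ := exists_monotone_eq_mulVec_alternatingSigns x h2.le
  obtain ⟨p, hp, hAxp⟩ := exists_strictMono_alternating (A *ᵥ x) hAx h1.ge
  set γ := Real.sign (firstNz x)
  set δ := Real.sign (firstNz (A *ᵥ x))
  set C : Matrix (Fin n) (Fin (r + 1)) ℝ := Matrix.of fun q k => if β q = k then |x q| else 0
  have hAxC : A *ᵥ x = γ • ((A * C) *ᵥ alternatingSigns (r + 1)) := by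
    rw [hxC, mulVec_mulVec, mulVec_smul]
  have hD : srPattern ((A * C).submatrix p id) ε :=
    (hA.mul_of_monotone hβ fun q => abs_nonneg (x q)).submatrix hp strictMono_id
  have hpos := hD.pos_mul_of_mulVec_alternatingSigns (σ := δ * γ) hε0 hsv fun j => by
    have h := hAxp j
    rw [hAxC, Pi.smul_apply, smul_eq_mul] at h
    change 0 < δ * γ * (-1) ^ (j : ℕ) * ((A * C) *ᵥ alternatingSigns (r + 1)) (p j)
    linarith
  have hγ := Real.sign_mul_self_of_ne_zero (firstNz_ne_zero x hx)
  have hε (s : ℕ) : ε s * ε s = 1 := by rcases hsv s with h | h <;> simp [h]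
  refine eq_of_mul_self_eq_one_of_pos_mul
    (Real.sign_mul_self_of_ne_zero (firstNz_ne_zero _ hAx)) ?_ (by linear_combination hpos)
  linear_combination
    (ε r * ε r) * (ε (r + 1) * ε (r + 1)) * hγ + ε r * ε r * hε (r + 1) + hε r

theorem stmt13 {m n : ℕ} (A : Matrix (Fin m) (Fin n) ℝ) (ε : ℕ → ℝ)
    (hε0 : ε 0 = 1) (hsv : ∀ r, ε r = 1 ∨ ε r = -1) (hA : srPattern A ε)
    (x : Fin n → ℝ) (hAx : A *ᵥ x ≠ 0) (r : ℕ) (hr : r ≤ min m n - 1)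
    (h1 : Sm (A *ᵥ x) = r) (h2 : Sm x = r) :
    Real.sign (firstNz (A *ᵥ x)) = ε r * ε (r + 1) * Real.sign (firstNz x) :=
  stmt13_general A ε hε0 hsv hA x hAx r h1 h2
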